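/- Under double separation of the dataset, the log-likelihood L(β, γ) = ∑ᵢ [yᵢ log(F(γᵀzᵢ)F(βᵀxᵢ)) + (1-yᵢ) log(1 - F(γᵀzᵢ)F(βᵀxᵢ))] of the zero-inflated logistic regression model has no maximizer in ℝ^d × ℝ^p. -/

import Mathlib

noncomputable def F (μ : ℝ) : ℝ := Real.exp μ / (1 + Real.exp μ)

noncomputable def L {n d p : ℕ} (y : Fin n → ℝ) (x : Fin n → Fin d → ℝ)
    (z : Fin n → Fin p → ℝ) (β : Fin d → ℝ) (γ : Fin p → ℝ) : ℝ :=
  ∑ i, (y i * Real.log (F (∑ l, γ l * z i l) * F (∑ l, β l * x i l))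
    + (1 - y i) * Real.log (1 - F (∑ l, γ l * z i l) * F (∑ l, β l * x i l)))

/-! Shifting the parameters along the separating directions, `(β, γ) ↦ (β + v, γ + w)`, moves
both linear predictors of every observation in the direction of its label. Since the success
probability `F(γᵀz) F(βᵀx)` is increasing in both predictors, every summand of the likelihood
weakly increases, and the summand of an observation with a nonzero shift increases strictly. -/

open Set

lemma F_eq_sigmoid : F = Real.sigmoid := by
  funext μ
  rw [F, Real.sigmoid_def, Real.exp_neg]
  field_simp
  ring

/-- Success probability of the zero-inflated model at predictors `u = (βᵀx, γᵀz)`. -/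
noncomputable def ziProb (u : ℝ × ℝ) : ℝ := F u.2 * F u.1

lemma ziProb_mem_Ioo (u : ℝ × ℝ) : ziProb u ∈ Ioo 0 1 := by
  rw [ziProb, F_eq_sigmoid]
  exact ⟨mul_pos (Real.sigmoid_pos _) (Real.sigmoid_pos _),
    mul_lt_one_of_nonneg_of_lt_one_left (Real.sigmoid_nonneg _) (Real.sigmoid_lt_one _)
      (Real.sigmoid_le_one _)⟩

lemma ziProb_strictMono : StrictMono ziProb := by
  rintro ⟨a, b⟩ ⟨a', b'⟩ h
  simp only [ziProb, F_eq_sigmoid]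
  rcases Prod.lt_iff.mp h with ⟨ha, hb⟩ | ⟨ha, hb⟩
  · exact mul_lt_mul' (Real.sigmoid_le hb) (Real.sigmoid_lt ha) (Real.sigmoid_nonneg a)
      (Real.sigmoid_pos b')
  · exact mul_lt_mul (Real.sigmoid_lt hb) (Real.sigmoid_le ha) (Real.sigmoid_pos a)
      (Real.sigmoid_nonneg b')

noncomputable def bernoulliLogLik (y q : ℝ) : ℝ := y * Real.log q + (1 - y) * Real.log (1 - q)

lemma bernoulliLogLik_lt {y q q' : ℝ} (hy : y = 0 ∨ y = 1) (hq : q ∈ Ioo 0 1)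
    (h1 : y = 1 → q < q') (h0 : y = 0 → q' < q) :
    bernoulliLogLik y q < bernoulliLogLik y q' := by
  rcases hy with rfl | rfl
  · simpa [bernoulliLogLik] using Real.log_lt_log (by linarith [hq.2]) (by linarith [h0 rfl])
  · simpa [bernoulliLogLik] using Real.log_lt_log hq.1 (h1 rfl)

lemma bernoulliLogLik_ziProb_lt_add {y : ℝ} {u s : ℝ × ℝ} (hy : y = 0 ∨ y = 1)
    (h1 : y = 1 → 0 ≤ s) (h0 : y = 0 → s ≤ 0) (hs : s ≠ 0) :
    bernoulliLogLik y (ziProb u) < bernoulliLogLik y (ziProb (u + s)) :=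
  bernoulliLogLik_lt hy (ziProb_mem_Ioo u)
    (fun hy1 ↦ ziProb_strictMono (lt_add_of_pos_right u ((h1 hy1).lt_of_ne' hs)))
    (fun hy0 ↦ ziProb_strictMono (add_lt_of_neg_right u ((h0 hy0).lt_of_ne hs)))

lemma bernoulliLogLik_ziProb_le_add {y : ℝ} {u s : ℝ × ℝ} (hy : y = 0 ∨ y = 1)
    (h1 : y = 1 → 0 ≤ s) (h0 : y = 0 → s ≤ 0) :
    bernoulliLogLik y (ziProb u) ≤ bernoulliLogLik y (ziProb (u + s)) := by
  rcases eq_or_ne s 0 with rfl | hs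
  · rw [add_zero]
  · exact (bernoulliLogLik_ziProb_lt_add hy h1 h0 hs).le

section Likelihood

variable {n d p : ℕ} (y : Fin n → ℝ) (x : Fin n → Fin d → ℝ) (z : Fin n → Fin p → ℝ)

lemma L_eq_sum_bernoulliLogLik (β : Fin d → ℝ) (γ : Fin p → ℝ) :
    L y x z β γ =
      ∑ i, bernoulliLogLik (y i) (ziProb (∑ l, β l * x i l, ∑ l, γ l * z i l)) :=
  rfl

lemma L_lt_L_add_of_separation (hy : ∀ i, y i = 0 ∨ y i = 1) {v : Fin d → ℝ} {w : Fin p → ℝ}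
    (hsep1 : ∀ i, y i = 1 → 0 ≤ (∑ l, v l * x i l) ∧ 0 ≤ (∑ l, w l * z i l))
    (hsep0 : ∀ i, y i = 0 → (∑ l, v l * x i l) ≤ 0 ∧ (∑ l, w l * z i l) ≤ 0)
    (hstrict : ∃ j, ((∑ l, v l * x j l), (∑ l, w l * z j l)) ≠ (0, 0))
    (β : Fin d → ℝ) (γ : Fin p → ℝ) :
    L y x z β γ < L y x z (β + v) (γ + w) := by
  simp only [L_eq_sum_bernoulliLogLik, Pi.add_apply, add_mul, Finset.sum_add_distrib,
    ← Prod.mk_add_mk]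
  obtain ⟨j, hj⟩ := hstrict
  exact Finset.sum_lt_sum
    (fun i _ ↦ bernoulliLogLik_ziProb_le_add (hy i) (fun h ↦ Prod.mk_le_mk.mpr (hsep1 i h))
      (fun h ↦ Prod.mk_le_mk.mpr (hsep0 i h)))
    ⟨j, Finset.mem_univ j, bernoulliLogLik_ziProb_lt_add (hy j)
      (fun h ↦ Prod.mk_le_mk.mpr (hsep1 j h)) (fun h ↦ Prod.mk_le_mk.mpr (hsep0 j h))
      hj⟩

end Likelihood

theorem no_mle_under_double_separation_general {n d p : ℕ}
    (y : Fin n → ℝ) (x : Fin n → Fin d → ℝ) (z : Fin n → Fin p → ℝ)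
    (hy : ∀ i, y i = 0 ∨ y i = 1)
    (v : Fin d → ℝ) (w : Fin p → ℝ)
    (hsep1 : ∀ i, y i = 1 → 0 ≤ (∑ l, v l * x i l) ∧ 0 ≤ (∑ l, w l * z i l))
    (hsep0 : ∀ i, y i = 0 → (∑ l, v l * x i l) ≤ 0 ∧ (∑ l, w l * z i l) ≤ 0)
    (hstrict : ∃ j, ((∑ l, v l * x j l), (∑ l, w l * z j l)) ≠ (0, 0)) :
    ¬ ∃ (β : Fin d → ℝ) (γ : Fin p → ℝ), ∀ (β' : Fin d → ℝ) (γ' : Fin p → ℝ),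
      L y x z β' γ' ≤ L y x z β γ := by
  rintro ⟨β, γ, hmax⟩
  exact (L_lt_L_add_of_separation y x z hy hsep1 hsep0 hstrict β γ).not_ge (hmax _ _)

theorem no_mle_under_double_separation {n d p : ℕ}
    (y : Fin n → ℝ) (x : Fin n → Fin d → ℝ) (z : Fin n → Fin p → ℝ)
    (hy : ∀ i, y i = 0 ∨ y i = 1)
    (v : Fin d → ℝ) (w : Fin p → ℝ) (hv : v ≠ 0) (hw : w ≠ 0)
    (hsep1 : ∀ i, y i = 1 → 0 ≤ (∑ l, v l * x i l) ∧ 0 ≤ (∑ l, w l * z i l))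
    (hsep0 : ∀ i, y i = 0 → (∑ l, v l * x i l) ≤ 0 ∧ (∑ l, w l * z i l) ≤ 0)
    (hstrict : ∃ j, ((∑ l, v l * x j l), (∑ l, w l * z j l)) ≠ (0, 0)) :
    ¬ ∃ (β : Fin d → ℝ) (γ : Fin p → ℝ), ∀ (β' : Fin d → ℝ) (γ' : Fin p → ℝ),
      L y x z β' γ' ≤ L y x z β γ :=
  no_mle_under_double_separation_general y x z hy v w hsep1 hsep0 hstrict
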